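/- Let d ≥ 2 be an integer, let λ, μ, ω be real constants with μ > 0, λ + 2μ > 0, ω > 0, and set k_s := ω/√μ. Let f₀, f₁, f₂ : (0,∞) → ℂ with f₀, f₁ differentiable and satisfying f₀'(z) = −f₁(z), f₁'(z) = f₁(z)/z − f₂(z), and d·f₁(z)/z = f₀(z) + f₂(z) for all z > 0. Fix y ∈ ℝ^d and define Φ_s(x) := f₀(k_s|x−y|) and the d×d shear Green tensor G_s(x) with entries (G_s(x))_{ij} = (1/μ)(Φ_s(x) δ_{ij} + (1/k_s²) ∂_{x_i}∂_{x_j} Φ_s(x)), where δ_{ij} is the Kronecker delta. Then for every x ∈ ℝ^d with x ≠ y, the trace of G_s(x) equals (d−1)Φ_s(x)/μ. -/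

import Mathlib

/-!
`Φ_s` is the radial function `g(r) = f₀(k_s r)` of `r = ‖x - y‖`, so `∑ᵢ ∂ᵢ∂ᵢ Φ_s` is the radial
Laplacian `g'' + (d - 1) g' / r`. The recurrences give `g' = -k_s f₁(k_s r)` and
`g'' = -k_s² (f₁/z - f₂)(k_s r)`, and `d f₁/z - f₂ = f₀` turns the Laplacian into `-k_s² Φ_s`
(the Helmholtz equation). Hence `tr G_s = (d Φ_s - Φ_s) / μ`.
-/

/-- Partial derivative ∂_i of a complex-valued function on ℝ^d. -/
noncomputable def pd {d : ℕ} (i : Fin d) (f : EuclideanSpace ℝ (Fin d) → ℂ) :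
    EuclideanSpace ℝ (Fin d) → ℂ :=
  fun x => fderiv ℝ f x (EuclideanSpace.single i 1)

/-- Second partial derivative ∂_i ∂_j. -/
noncomputable def pd2 {d : ℕ} (i j : Fin d) (f : EuclideanSpace ℝ (Fin d) → ℂ) :
    EuclideanSpace ℝ (Fin d) → ℂ :=
  pd i (pd j f)

open Filter Topology

theorem HasDerivAt.comp_const_mul_real {E : Type*} [NormedAddCommGroup E] [NormedSpace ℝ E]
    {f : ℝ → E} {f' : E} {k r : ℝ} (hf : HasDerivAt f f' (k * r)) :
    HasDerivAt (fun s => f (k * s)) (k • f') r := by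
  simpa [Function.comp_def] using hf.scomp r ((hasDerivAt_id r).const_mul k)

section NormCalculus

variable {F : Type*} [NormedAddCommGroup F] [InnerProductSpace ℝ F]

theorem hasFDerivAt_norm {x : F} (hx : x ≠ 0) :
    HasFDerivAt (fun w : F => ‖w‖) (‖x‖⁻¹ • innerSL ℝ x) x := by
  have hx2 : ‖x‖ ^ 2 ≠ 0 := by positivity
  convert (hasStrictFDerivAt_norm_sq x).hasFDerivAt.sqrt hx2 using 1
  · simp [Real.sqrt_sq (norm_nonneg _)]
  · rw [Real.sqrt_sq (norm_nonneg _), two_smul ℕ, ← two_smul ℝ, smul_smul]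
    congr 1
    field_simp

theorem hasFDerivAt_norm_sub {x y : F} (hx : x ≠ y) :
    HasFDerivAt (fun w : F => ‖w - y‖) (‖x - y‖⁻¹ • innerSL ℝ (x - y)) x :=
  ((hasFDerivAt_norm (sub_ne_zero.mpr hx)).comp x ((hasFDerivAt_id x).sub_const y)).congr_fderiv
    (by ext; simp)

theorem HasDerivAt.comp_norm_sub {E : Type*} [NormedAddCommGroup E] [NormedSpace ℝ E]
    {g : ℝ → E} {g' : E} {x y : F} (hg : HasDerivAt g g' ‖x - y‖) (hx : x ≠ y) :
    HasFDerivAt (fun w => g ‖w - y‖) ((‖x - y‖⁻¹ • innerSL ℝ (x - y)).smulRight g') x :=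
  hg.hasFDerivAt.comp x (hasFDerivAt_norm_sub hx)
    |>.congr_fderiv (by ext; simp [mul_smul, sub_smul])

end NormCalculus

section PartialDerivatives

variable {d : ℕ} {x y : EuclideanSpace ℝ (Fin d)}

theorem pd_eq_of_hasFDerivAt {f : EuclideanSpace ℝ (Fin d) → ℂ}
    {f' : EuclideanSpace ℝ (Fin d) →L[ℝ] ℂ} (hf : HasFDerivAt f f' x) (j : Fin d) :
    pd j f x = f' (EuclideanSpace.single j 1) := by
  rw [pd, hf.fderiv]

theorem pd_comp_norm_sub {g : ℝ → ℂ} {g' : ℂ} (hg : HasDerivAt g g' ‖x - y‖) (hx : x ≠ y)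
    (j : Fin d) : pd j (fun w => g ‖w - y‖) x = g' / ‖x - y‖ * (x - y) j := by
  rw [pd_eq_of_hasFDerivAt (hg.comp_norm_sub hx)]
  simp only [map_sub, ContinuousLinearMap.smulRight_apply, smul_apply, sub_apply,
    coe_innerSL_apply, EuclideanSpace.inner_single_right, Real.ringHom_apply, one_mul,
    smul_eq_mul, Complex.real_smul, Complex.ofReal_mul, Complex.ofReal_inv,
    Complex.ofReal_sub, PiLp.sub_apply]
  ring

theorem pd_mul {f h : EuclideanSpace ℝ (Fin d) → ℂ} (hf : DifferentiableAt ℝ f x)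
    (hh : DifferentiableAt ℝ h x) (j : Fin d) :
    pd j (fun w => f w * h w) x = pd j f x * h x + f x * pd j h x := by
  rw [pd_eq_of_hasFDerivAt (f := fun w => f w * h w) (hf.hasFDerivAt.mul hh.hasFDerivAt), pd,
    pd]
  simp only [add_apply, smul_apply, smul_eq_mul]
  ring

theorem hasFDerivAt_coord_sub (j : Fin d) :
    HasFDerivAt (fun w : EuclideanSpace ℝ (Fin d) => ((w - y) j : ℂ))
      (Complex.ofRealCLM.comp (EuclideanSpace.proj j)) x :=
  (Complex.ofRealCLM.comp (EuclideanSpace.proj j)).hasFDerivAt.sub_const ((y j : ℝ) : ℂ)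
    |>.congr_of_eventuallyEq (.of_forall fun w => by simp)

theorem pd_coord_sub (j : Fin d) : pd j (fun w => ((w - y) j : ℂ)) x = 1 := by
  rw [pd_eq_of_hasFDerivAt (hasFDerivAt_coord_sub j)]
  simp

theorem sum_pd2_comp_norm_sub {g g' : ℝ → ℂ} {g'' : ℂ}
    (hg : ∀ r, 0 < r → HasDerivAt g (g' r) r) (hg' : HasDerivAt g' g'' ‖x - y‖) (hx : x ≠ y) :
    ∑ j, pd2 j j (fun w => g ‖w - y‖) x = g'' + (d - 1) * g' ‖x - y‖ / ‖x - y‖ := by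
  set r := ‖x - y‖
  have hr : 0 < r := norm_sub_pos_iff.mpr hx
  have hr' : (r : ℂ) ≠ 0 := by exact_mod_cast hr.ne'
  -- `∂ⱼ (g ∘ r) = (g' r / r) (x - y)ⱼ` is again radial times a coordinate; differentiate that.
  set G : ℝ → ℂ := fun s => g' s / s
  have hG : HasDerivAt G ((g'' * r - g' r) / r ^ 2) r := by
    have h := hg'.div (hasDerivAt_id r).ofReal_comp hr'
    simp only [id, Complex.ofReal_one, mul_one] at h
    exact h
  have hpd (j : Fin d) :
      pd j (fun w => g ‖w - y‖) =ᶠ[𝓝 x] fun w => G ‖w - y‖ * ((w - y) j : ℂ) := by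
    filter_upwards [isOpen_ne.mem_nhds hx] with w hw
    exact pd_comp_norm_sub (hg _ (norm_sub_pos_iff.mpr hw)) hw j
  have hpd2 (j : Fin d) : pd2 j j (fun w => g ‖w - y‖) x
      = (g'' * r - g' r) / r ^ 2 / r * ((x - y) j : ℂ) ^ 2 + G r := by
    rw [pd2, pd, (hpd j).fderiv_eq, ← pd, pd_mul (hG.comp_norm_sub hx).differentiableAt
      (hasFDerivAt_coord_sub j).differentiableAt, pd_comp_norm_sub hG hx, pd_coord_sub]
    ring
  have hsum : ∑ j, ((x - y) j : ℂ) ^ 2 = (r : ℂ) ^ 2 := by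
    exact_mod_cast (EuclideanSpace.real_norm_sq_eq (x - y)).symm
  simp only [hpd2, Finset.sum_add_distrib, ← Finset.mul_sum, hsum, Finset.sum_const,
    Finset.card_univ, Fintype.card_fin, nsmul_eq_mul, G]
  field_simp
  ring

theorem sum_pd2_comp_norm_sub_eq_neg_sq_mul {f0 f1 f2 : ℝ → ℂ} {k : ℝ} (hk : 0 < k)
    (hf0 : ∀ z : ℝ, 0 < z → HasDerivAt f0 (-(f1 z)) z)
    (hf1 : ∀ z : ℝ, 0 < z → HasDerivAt f1 (f1 z / (z : ℂ) - f2 z) z)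
    (hrec : ∀ z : ℝ, 0 < z → (d : ℂ) * f1 z / (z : ℂ) = f0 z + f2 z) (hx : x ≠ y) :
    ∑ j, pd2 j j (fun w => f0 (k * ‖w - y‖)) x = -k ^ 2 * f0 (k * ‖x - y‖) := by
  have hr : 0 < ‖x - y‖ := norm_sub_pos_iff.mpr hx
  have hz : 0 < k * ‖x - y‖ := mul_pos hk hr
  have hg (r : ℝ) (hr : 0 < r) : HasDerivAt (fun s => f0 (k * s)) (-k * f1 (k * r)) r := by
    simpa [Complex.real_smul] using (hf0 _ (mul_pos hk hr)).comp_const_mul_real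
  have hg' : HasDerivAt (fun s => -k * f1 (k * s))
      (-k * (k * (f1 (k * ‖x - y‖) / (k * ‖x - y‖ : ℝ) - f2 (k * ‖x - y‖)))) ‖x - y‖ := by
    simpa [Complex.real_smul] using ((hf1 _ hz).comp_const_mul_real).const_mul (-(k : ℂ))
  rw [sum_pd2_comp_norm_sub hg hg' hx, eq_sub_of_add_eq' (hrec _ hz).symm]
  have hk' : (k : ℂ) ≠ 0 := by exact_mod_cast hk.ne'
  have hr' : (‖x - y‖ : ℂ) ≠ 0 := by exact_mod_cast hr.ne'
  push_cast
  field_simp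
  ring

end PartialDerivatives

theorem trace_shear_green_tensor_general
    (d : ℕ)
    (mu om : ℝ) (hmu : 0 < mu) (hom : 0 < om)
    (ks : ℝ) (hks : ks = om / Real.sqrt mu)
    (f0 f1 f2 : ℝ → ℂ)
    (hf0 : ∀ z : ℝ, 0 < z → HasDerivAt f0 (-(f1 z)) z)
    (hf1 : ∀ z : ℝ, 0 < z → HasDerivAt f1 (f1 z / (z : ℂ) - f2 z) z)
    (hrec : ∀ z : ℝ, 0 < z → (d : ℂ) * f1 z / (z : ℂ) = f0 z + f2 z)
    (y : EuclideanSpace ℝ (Fin d))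
    (Φs : EuclideanSpace ℝ (Fin d) → ℂ)
    (hΦs : ∀ x, Φs x = f0 (ks * ‖x - y‖))
    (Gs : EuclideanSpace ℝ (Fin d) → Matrix (Fin d) (Fin d) ℂ)
    (hGs : ∀ x (i j : Fin d), Gs x i j =
      ((1 / mu : ℝ) : ℂ) * (Φs x * (if i = j then 1 else 0)
        + ((1 / ks ^ 2 : ℝ) : ℂ) * pd2 i j Φs x)) :
    ∀ x : EuclideanSpace ℝ (Fin d), x ≠ y →
      (Gs x).trace = ((d : ℂ) - 1) * Φs x / ((mu : ℝ) : ℂ) := by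
  intro x hx
  have hks0 : 0 < ks := hks ▸ div_pos hom (Real.sqrt_pos.mpr hmu)
  have hΔ : ∑ j, pd2 j j Φs x = -ks ^ 2 * Φs x := by
    rw [funext hΦs]
    exact sum_pd2_comp_norm_sub_eq_neg_sq_mul hks0 hf0 hf1 hrec hx
  have hks' : (ks : ℂ) ≠ 0 := by exact_mod_cast hks0.ne'
  simp only [Matrix.trace, Matrix.diag_apply, hGs, if_pos, mul_one, ← Finset.mul_sum,
    Finset.sum_add_distrib, hΔ, Finset.sum_const, Finset.card_univ, Fintype.card_fin, nsmul_eq_mul]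
  push_cast
  field_simp
  ring

/-- Trace of the shear Green tensor `G_s` equals `(d-1)Φ_s/μ`. -/
theorem trace_shear_green_tensor
    (d : ℕ) (hd : 2 ≤ d)
    (lam mu om : ℝ) (hmu : 0 < mu) (hlm : 0 < lam + 2 * mu) (hom : 0 < om)
    (ks : ℝ) (hks : ks = om / Real.sqrt mu)
    (f0 f1 f2 : ℝ → ℂ)
    (hf0 : ∀ z : ℝ, 0 < z → HasDerivAt f0 (-(f1 z)) z)
    (hf1 : ∀ z : ℝ, 0 < z → HasDerivAt f1 (f1 z / (z : ℂ) - f2 z) z)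
    (hrec : ∀ z : ℝ, 0 < z → (d : ℂ) * f1 z / (z : ℂ) = f0 z + f2 z)
    (y : EuclideanSpace ℝ (Fin d))
    (Φs : EuclideanSpace ℝ (Fin d) → ℂ)
    (hΦs : ∀ x, Φs x = f0 (ks * ‖x - y‖))
    (Gs : EuclideanSpace ℝ (Fin d) → Matrix (Fin d) (Fin d) ℂ)
    (hGs : ∀ x (i j : Fin d), Gs x i j =
      ((1 / mu : ℝ) : ℂ) * (Φs x * (if i = j then 1 else 0)
        + ((1 / ks ^ 2 : ℝ) : ℂ) * pd2 i j Φs x)) :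
    ∀ x : EuclideanSpace ℝ (Fin d), x ≠ y →
      (Gs x).trace = ((d : ℂ) - 1) * Φs x / ((mu : ℝ) : ℂ) :=
  trace_shear_green_tensor_general d mu om hmu hom ks hks f0 f1 f2 hf0 hf1 hrec y Φs hΦs Gs hGs
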